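/- Let m ∈ (1,2], β ≤ 1+√m, and suppose (u_k)_{k≥1} ∈ {0,1,m}^ℕ is a unique β-expansion over the alphabet {0,1,m}. If u_i = m for some i, then u_k = m for all k ≤ i. -/

import Mathlib

/-!
Write `t n` for the value of the tail `u n, u (n+1), …`, so that `β t n = u n + t (n+1)` and
`t n ∈ [0, M]` with `M = m / (β - 1)`. Since `max 1 (m - 1) ≤ M`, every point of `[0, M]` has a
(greedy) expansion, so a unique expansion cannot allow a digit to be traded for a neighbouring one
with the difference absorbed by the tail; this gives
`u n = 0 → β t n < 1`, `u n = 1 → β t n < m`, `u n = m → 1 + M < β t n`.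
If `u (j+1) = m` then `β t (j+1) > 1 + M ≥ β` (this is `β ≤ 1 + √m`), so `t (j+1) > 1` and
`β t j = u j + t (j+1) > u j + 1`. For `u j = 0` or `u j = 1` (using `m ≤ 2`) this violates the
conditions, hence `u j = m`, and the claim follows by downward induction.
-/

open Finset Filter Set Topology

namespace BetaExpansion

def IsDigit (m a : ℝ) : Prop := a = 0 ∨ a = 1 ∨ a = m

noncomputable def value (β : ℝ) (u : ℕ → ℝ) : ℝ := ∑' k, u k / β ^ (k + 1)

noncomputable def tailValue (β : ℝ) (u : ℕ → ℝ) (n : ℕ) : ℝ := value β fun k => u (n + k)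

def HasExpansion (m β y : ℝ) : Prop := ∃ w : ℕ → ℝ, (∀ k, IsDigit m (w k)) ∧ value β w = y

def IsUnique (m β : ℝ) (u : ℕ → ℝ) : Prop :=
  ∀ v : ℕ → ℝ, (∀ k, IsDigit m (v k)) → value β v = value β u → v = u

variable {m β c : ℝ} {u v : ℕ → ℝ}

theorem IsDigit.mem_Icc {a : ℝ} (hm : 1 ≤ m) (h : IsDigit m a) : a ∈ Icc 0 m := by
  rcases h with rfl | rfl | rfl <;> constructor <;> linarith

theorem hasSum_const_div_pow (hβ : 1 < β) (c : ℝ) :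
    HasSum (fun k : ℕ => c / β ^ (k + 1)) (c / (β - 1)) := by
  have hβ₀ : β ≠ 0 := by positivity
  have hβ₁ : β - 1 ≠ 0 := by linarith
  have hterm : (fun k : ℕ => c / β ^ (k + 1)) = fun k => c / β * β⁻¹ ^ k := by
    funext k
    rw [pow_succ, inv_pow]
    field_simp
  have hsum : c / β * (1 - β⁻¹)⁻¹ = c / (β - 1) := by
    field_simp
  rw [hterm, ← hsum]
  exact (hasSum_geometric_of_lt_one (by positivity) (inv_lt_one_of_one_lt₀ hβ)).mul_left _

theorem summable_of_mem_Icc (hβ : 1 < β) (hu : ∀ k, u k ∈ Icc 0 c) :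
    Summable fun k => u k / β ^ (k + 1) :=
  Summable.of_nonneg_of_le (fun k => div_nonneg (hu k).1 (by positivity))
    (fun k => by gcongr; exact (hu k).2)
    (hasSum_const_div_pow hβ c).summable

theorem value_mem_Icc (hβ : 1 < β) (hu : ∀ k, u k ∈ Icc 0 c) :
    value β u ∈ Icc 0 (c / (β - 1)) :=
  ⟨tsum_nonneg fun k => div_nonneg (hu k).1 (by positivity),
    hasSum_le (fun k => by gcongr; exact (hu k).2)
      (summable_of_mem_Icc hβ hu).hasSum (hasSum_const_div_pow hβ c)⟩

theorem tailValue_mem_Icc (hβ : 1 < β) (hu : ∀ k, u k ∈ Icc 0 c) (n : ℕ) :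
    tailValue β u n ∈ Icc 0 (c / (β - 1)) :=
  value_mem_Icc hβ fun k => hu (n + k)

theorem value_eq_sum_add_tailValue (hβ : 1 < β) (hu : ∀ k, u k ∈ Icc 0 c) (n : ℕ) :
    value β u = ∑ k ∈ range n, u k / β ^ (k + 1) + tailValue β u n / β ^ n := by
  rw [value, ← (summable_of_mem_Icc hβ hu).sum_add_tsum_nat_add n, tailValue, value,
    ← tsum_div_const]
  congr 1
  refine tsum_congr fun k => ?_
  rw [add_comm k n, div_div, ← pow_add]
  congr 2
  omega

theorem mul_tailValue (hβ : 1 < β) (hu : ∀ k, u k ∈ Icc 0 c) (n : ℕ) :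
    β * tailValue β u n = u n + tailValue β u (n + 1) := by
  have hsplit := (value_eq_sum_add_tailValue hβ hu n).symm.trans
    (value_eq_sum_add_tailValue hβ hu (n + 1))
  rw [sum_range_succ, add_assoc, add_right_inj, pow_succ] at hsplit
  have : β ^ n ≠ 0 := by positivity
  field_simp at hsplit
  linarith

theorem value_eq_of_tailValue_eq (hβ : 1 < β) (hu : ∀ k, u k ∈ Icc 0 c)
    (hv : ∀ k, v k ∈ Icc 0 c) {n : ℕ} (hlt : ∀ k < n, v k = u k)
    (ht : tailValue β v n = tailValue β u n) : value β v = value β u := by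
  rw [value_eq_sum_add_tailValue hβ hv n, value_eq_sum_add_tailValue hβ hu n, ht,
    sum_congr rfl fun k hk => by rw [hlt k (mem_range.1 hk)]]

noncomputable def greedyDigit (m β y : ℝ) : ℝ :=
  if m ≤ β * y then m else if 1 ≤ β * y then 1 else 0

noncomputable def greedyMap (m β y : ℝ) : ℝ := β * y - greedyDigit m β y

theorem isDigit_greedyDigit (m β y : ℝ) : IsDigit m (greedyDigit m β y) := by
  unfold greedyDigit IsDigit
  split_ifs <;> simp

theorem greedyMap_mem_Icc (hβ : 1 < β) (h₁ : 1 ≤ m / (β - 1)) (h₂ : m - 1 ≤ m / (β - 1))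
    {y : ℝ} (hy : y ∈ Icc 0 (m / (β - 1))) : greedyMap m β y ∈ Icc 0 (m / (β - 1)) := by
  have hfix : β * (m / (β - 1)) - m = m / (β - 1) := by
    have : β - 1 ≠ 0 := by linarith
    field_simp
    ring
  have hβy : β * y ≤ β * (m / (β - 1)) := by gcongr; exact hy.2
  have hβy₀ : 0 ≤ β * y := mul_nonneg (by positivity) hy.1
  unfold greedyMap greedyDigit
  split_ifs <;> constructor <;> linarith

theorem hasExpansion_of_mem_Icc (hβ : 1 < β) (hm : 1 ≤ m) (h₁ : 1 ≤ m / (β - 1))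
    (h₂ : m - 1 ≤ m / (β - 1)) {y : ℝ} (hy : y ∈ Icc 0 (m / (β - 1))) :
    HasExpansion m β y := by
  set z : ℕ → ℝ := fun n => (greedyMap m β)^[n] y
  have hz_succ (n : ℕ) : z (n + 1) = greedyMap m β (z n) :=
    Function.iterate_succ_apply' _ n y
  have hz (n : ℕ) : z n ∈ Icc 0 (m / (β - 1)) := by
    induction n with
    | zero => exact hy
    | succ n ih => rw [hz_succ]; exact greedyMap_mem_Icc hβ h₁ h₂ ih
  set w : ℕ → ℝ := fun k => greedyDigit m β (z k)
  have hw (k : ℕ) : IsDigit m (w k) := isDigit_greedyDigit m β (z k)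
  have hpartial (n : ℕ) : ∑ k ∈ range n, w k / β ^ (k + 1) = y - z n / β ^ n := by
    induction n with
    | zero => simp [z]
    | succ n ih =>
      have : β ^ n ≠ 0 := by positivity
      rw [sum_range_succ, ih, hz_succ, greedyMap, pow_succ]
      field_simp
      ring
  have hrem : Tendsto (fun n => z n / β ^ n) atTop (𝓝 0) :=
    squeeze_zero (fun n => div_nonneg (hz n).1 (by positivity))
      (fun n => by gcongr; exact (hz n).2)
      (tendsto_const_nhds.div_atTop (tendsto_pow_atTop_atTop_of_one_lt hβ))
  refine ⟨w, hw, HasSum.tsum_eq ?_⟩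
  rw [hasSum_iff_tendsto_nat_of_nonneg
    (fun k => div_nonneg ((hw k).mem_Icc hm).1 (by positivity)), funext hpartial]
  simpa using tendsto_const_nhds.sub hrem

/-- `u` with `u n` replaced by `d` and its tail after `n` by an expansion of `r` has the same
value as `u`, so it is `u`. -/
theorem eq_of_mul_tailValue_eq (hβ : 1 < β) (hm : 1 ≤ m) (hu : ∀ k, IsDigit m (u k))
    (huniq : IsUnique m β u)
    (hrep : ∀ y ∈ Icc 0 (m / (β - 1)), HasExpansion m β y)
    {n : ℕ} {d r : ℝ} (hd : IsDigit m d) (hr : r ∈ Icc 0 (m / (β - 1)))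
    (h : β * tailValue β u n = d + r) : u n = d := by
  obtain ⟨w, hw, rfl⟩ := hrep r hr
  set v : ℕ → ℝ := fun k => if k < n then u k else if k = n then d else w (k - (n + 1))
  have hv (k : ℕ) : IsDigit m (v k) := by
    simp only [v]
    split_ifs
    exacts [hu k, hd, hw _]
  have hvn : v n = d := by simp [v]
  have hvt : tailValue β v (n + 1) = value β w := by
    unfold tailValue
    congr 1
    funext k
    simp [v, show ¬n + 1 + k < n by omega, show n + 1 + k ≠ n by omega]
  have ht : tailValue β v n = tailValue β u n := by
    have hrec := mul_tailValue hβ (fun k => (hv k).mem_Icc hm) n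
    rw [hvn, hvt, ← h] at hrec
    exact mul_left_cancel₀ (by positivity) hrec
  rw [← hvn, huniq v hv (value_eq_of_tailValue_eq hβ (fun k => (hu k).mem_Icc hm)
    (fun k => (hv k).mem_Icc hm) (fun k hk => if_pos hk) ht)]

theorem mul_tailValue_lt_one_of_eq_zero (hβ : 1 < β) (hm : 1 ≤ m)
    (hu : ∀ k, IsDigit m (u k)) (huniq : IsUnique m β u)
    (hrep : ∀ y ∈ Icc 0 (m / (β - 1)), HasExpansion m β y)
    {n : ℕ} (h0 : u n = 0) : β * tailValue β u n < 1 := by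
  have hu' (k : ℕ) : u k ∈ Icc 0 m := (hu k).mem_Icc hm
  have hrec := mul_tailValue hβ hu' n
  have htail := (tailValue_mem_Icc hβ hu' (n + 1)).2
  by_contra! hge
  have hdigit := eq_of_mul_tailValue_eq hβ hm hu huniq hrep (Or.inr (Or.inl rfl))
    (r := β * tailValue β u n - 1) ⟨by linarith, by linarith⟩ (by ring)
  linarith

theorem mul_tailValue_lt_of_eq_one (hβ : 1 < β) (hm : 1 < m)
    (hu : ∀ k, IsDigit m (u k)) (huniq : IsUnique m β u)
    (hrep : ∀ y ∈ Icc 0 (m / (β - 1)), HasExpansion m β y)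
    {n : ℕ} (h1 : u n = 1) : β * tailValue β u n < m := by
  have hu' (k : ℕ) : u k ∈ Icc 0 m := (hu k).mem_Icc hm.le
  have hrec := mul_tailValue hβ hu' n
  have htail := (tailValue_mem_Icc hβ hu' (n + 1)).2
  by_contra! hge
  have hdigit := eq_of_mul_tailValue_eq hβ hm.le hu huniq hrep (Or.inr (Or.inr rfl))
    (r := β * tailValue β u n - m) ⟨by linarith, by linarith⟩ (by ring)
  linarith

theorem lt_mul_tailValue_of_eq_m (hβ : 1 < β) (hm : 1 < m)
    (hu : ∀ k, IsDigit m (u k)) (huniq : IsUnique m β u)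
    (hrep : ∀ y ∈ Icc 0 (m / (β - 1)), HasExpansion m β y)
    {n : ℕ} (hmn : u n = m) : 1 + m / (β - 1) < β * tailValue β u n := by
  have hu' (k : ℕ) : u k ∈ Icc 0 m := (hu k).mem_Icc hm.le
  have hrec := mul_tailValue hβ hu' n
  have htail := (tailValue_mem_Icc hβ hu' (n + 1)).1
  by_contra! hle
  have hdigit := eq_of_mul_tailValue_eq hβ hm.le hu huniq hrep (Or.inr (Or.inl rfl))
    (r := β * tailValue β u n - 1) ⟨by linarith, by linarith⟩ (by ring)
  linarith

theorem eq_m_of_succ_eq_m (hβ : 1 < β) (hm₁ : 1 < m) (hm₂ : m ≤ 2) (hβm : (β - 1) ^ 2 ≤ m)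
    (hu : ∀ k, IsDigit m (u k)) (huniq : IsUnique m β u)
    (hrep : ∀ y ∈ Icc 0 (m / (β - 1)), HasExpansion m β y)
    {j : ℕ} (h : u (j + 1) = m) : u j = m := by
  have hM : β - 1 ≤ m / (β - 1) := by
    rw [le_div_iff₀ (by linarith)]
    nlinarith
  have hbig := lt_mul_tailValue_of_eq_m hβ hm₁ hu huniq hrep h
  have hgt : 1 < tailValue β u (j + 1) := by nlinarith
  have hrec := mul_tailValue hβ (fun k => (hu k).mem_Icc hm₁.le) j
  rcases hu j with h0 | h1 | hmj
  · have := mul_tailValue_lt_one_of_eq_zero hβ hm₁.le hu huniq hrep h0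
    exfalso
    linarith
  · have := mul_tailValue_lt_of_eq_one hβ hm₁ hu huniq hrep h1
    exfalso
    linarith
  · exact hmj

end BetaExpansion

open BetaExpansion in
/-- for m ∈ (1,2] and 1 < β ≤ 1+√m, if u is a unique β-expansion over
{0,1,m} and u_i = m, then u_k = m for all k ≤ i. -/
theorem stmt_13 (m β : ℝ) (hm1 : 1 < m) (hm2 : m ≤ 2) (hβ1 : 1 < β)
    (hβ2 : β ≤ 1 + Real.sqrt m)
    (u : ℕ → ℝ) (hdig : ∀ k, u k = 0 ∨ u k = 1 ∨ u k = m)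
    (huniq : ∀ v : ℕ → ℝ, (∀ k, v k = 0 ∨ v k = 1 ∨ v k = m) →
      (∑' k : ℕ, v k / β ^ (k + 1)) = (∑' k : ℕ, u k / β ^ (k + 1)) → v = u)
    (i : ℕ) (hi : u i = m) :
    ∀ k ≤ i, u k = m := by
  have hβm : (β - 1) ^ 2 ≤ m := by
    nlinarith [Real.sq_sqrt (by linarith : 0 ≤ m), Real.sqrt_nonneg m]
  have hM₁ : 1 ≤ m / (β - 1) := by
    rw [le_div_iff₀ (by linarith)]
    nlinarith
  have hrep (y : ℝ) (hy : y ∈ Icc 0 (m / (β - 1))) : HasExpansion m β y :=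
    hasExpansion_of_mem_Icc hβ1 hm1.le hM₁ (by linarith) hy
  intro k hk
  exact Nat.decreasingInduction (motive := fun k _ => u k = m)
    (fun j _ ih => eq_m_of_succ_eq_m hβ1 hm1 hm2 hβm hdig huniq hrep ih) hi hk
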